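/- Assume δ ≥ 0 and d ≥ 1, so that var(f_δ) > 0. For each k ∈ {1,…,d}, the first-order Sobol' index of f_δ satisfies S_k = ( (δ²/27)(9/4)^d + (δ/9)(3/2)^d + 1/12 ) / ( (dδ/9)(3/2)^d + δ²((7/3)^d − (9/4)^d) + d/12 ), and the total Sobol' index satisfies S_k^tot = 1 − ( (δ(d−1)/9)(3/2)^d + δ²((27/28)(7/3)^d − (9/4)^d) + (d−1)/12 ) / ( (dδ/9)(3/2)^d + δ²((7/3)^d − (9/4)^d) + d/12 ). -/

import Mathlib

/-!
Write `S(x) = ∑ᵢ xᵢ` and `P(x) = ∏ⱼ (1 + xⱼ)` over a set of `n` coordinates. Under the uniform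
measure on the cube, integrals of products of one-variable functions factor, so the moments of
`S` and `P` are explicit and `a + b S + c P` has variance
`b² n / 12 + b c n (3/2)ⁿ / 9 + c² ((7/3)ⁿ - (9/4)ⁿ)`. Now `f_δ = S + δ P` on all `d` coordinates,
and integrating out coordinate `k` only replaces `1 + x_k` by `3/2`, so `E(f_δ | x_l, l ≠ k)` is
again of this shape on the other `d - 1` coordinates, while `E(f_δ | x_k)` is affine in `x_k`
with slope `1 + δ (3/2)^(d-1)`. The index formulas are then algebra.
-/

open MeasureTheory Real

/-- Benchmark function `f_δ(x) = Σ_{i=1}^d x_i + δ ∏_{j=1}^d (1 + x_j)` on `[0,1]^d`. -/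
noncomputable def fdelta {d : ℕ} (δ : ℝ) (x : Fin d → ℝ) : ℝ :=
  (∑ i, x i) + δ * ∏ j, (1 + x j)

/-- `g_k(t) = E(f_δ | x_k = t)`: the integral of `f_δ` over all coordinates other
than the `k`-th one, which is fixed to `t`. -/
noncomputable def gk {d : ℕ} (δ : ℝ) (k : Fin d) (t : ℝ) : ℝ :=
  ∫ y in Set.Icc (0 : Fin d → ℝ) 1, fdelta δ (Function.update y k t)

/-- `h_k(x) = E(f_δ | x_l, l ≠ k)`: the integral of `f_δ` over the `k`-th
coordinate with the remaining coordinates fixed. -/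
noncomputable def hk {d : ℕ} (δ : ℝ) (k : Fin d) (x : Fin d → ℝ) : ℝ :=
  ∫ t in Set.Icc (0 : ℝ) 1, fdelta δ (Function.update x k t)

/-- Variance of `f_δ` over the uniform measure on `[0,1]^d`. -/
noncomputable def fdeltaVar (d : ℕ) (δ : ℝ) : ℝ :=
  (∫ x in Set.Icc (0 : Fin d → ℝ) 1, (fdelta δ x) ^ 2) -
    (∫ x in Set.Icc (0 : Fin d → ℝ) 1, fdelta δ x) ^ 2

open Set Finset

theorem integral_unitInterval_quadratic (a b c : ℝ) :
    ∫ t in Icc (0 : ℝ) 1, (a + b * t + c * t ^ 2) = a + b / 2 + c / 3 := by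
  have hI : ∀ f : ℝ → ℝ, Continuous f → IntervalIntegrable f volume 0 1 :=
    fun f hf => hf.intervalIntegrable 0 1
  rw [integral_Icc_eq_integral_Ioc, ← intervalIntegral.integral_of_le zero_le_one,
    intervalIntegral.integral_add (hI _ (by fun_prop)) (hI _ (by fun_prop)),
    intervalIntegral.integral_add (hI _ (by fun_prop)) (hI _ (by fun_prop)),
    intervalIntegral.integral_const_mul b fun t => t, intervalIntegral.integral_const_mul,
    intervalIntegral.integral_const, integral_id, integral_pow, smul_eq_mul]
  norm_num [div_eq_mul_inv]

theorem integral_unitInterval_id : ∫ t in Icc (0 : ℝ) 1, t = 1 / 2 := by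
  convert integral_unitInterval_quadratic 0 1 0 using 3 <;> ring

theorem integral_unitInterval_one_add : ∫ t in Icc (0 : ℝ) 1, (1 + t) = 3 / 2 := by
  convert integral_unitInterval_quadratic 1 1 0 using 3 <;> ring

theorem integral_unitInterval_affine_sq_sub_sq (α β : ℝ) :
    (∫ t in Icc (0 : ℝ) 1, (α + β * t) ^ 2) - (∫ t in Icc (0 : ℝ) 1, (α + β * t)) ^ 2 =
      β ^ 2 / 12 := by
  have hsq := integral_unitInterval_quadratic (α ^ 2) (2 * α * β) (β ^ 2)
  have hlin := integral_unitInterval_quadratic α β 0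
  simp only [zero_mul, add_zero] at hlin
  rw [hlin, show (fun t : ℝ => (α + β * t) ^ 2) =
    fun t => α ^ 2 + 2 * α * β * t + β ^ 2 * t ^ 2 from funext fun t => by ring, hsq]
  ring

section UnitCube

variable {ι : Type*} [Fintype ι]

theorem integral_unitCube_finset_prod (s : Finset ι) (F : ι → ℝ → ℝ) :
    ∫ x in Icc (0 : ι → ℝ) 1, ∏ j ∈ s, F j (x j) = ∏ j ∈ s, ∫ t in Icc (0 : ℝ) 1, F j t := by
  classical
  -- extend to all coordinates by the constant `1`, whose integral over `[0,1]` is `1`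
  let G j : ℝ → ℝ := if j ∈ s then F j else 1
  have hcube : volume.restrict (Icc (0 : ι → ℝ) 1) =
      Measure.pi fun _ => volume.restrict (Icc (0 : ℝ) 1) := by
    rw [← pi_univ_Icc, volume_pi, Measure.restrict_pi_pi]; rfl
  have hG j : ∫ t in Icc (0 : ℝ) 1, G j t =
      if j ∈ s then ∫ t in Icc (0 : ℝ) 1, F j t else 1 := by
    by_cases hj : j ∈ s <;> simp [G, hj]
  calc ∫ x in Icc (0 : ι → ℝ) 1, ∏ j ∈ s, F j (x j)
      = ∫ x in Icc (0 : ι → ℝ) 1, ∏ j, G j (x j) := by simp [G, ite_apply, prod_ite_mem]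
    _ = ∏ j, ∫ t in Icc (0 : ℝ) 1, G j t := by rw [hcube, integral_fintype_prod_eq_prod]
    _ = ∏ j ∈ s, ∫ t in Icc (0 : ℝ) 1, F j t := by
        simp only [hG, prod_ite_mem, Finset.univ_inter]

theorem integral_unitCube_apply_mul_prod {i : ι} {s : Finset ι} (hi : i ∉ s) (g h : ℝ → ℝ) :
    ∫ x in Icc (0 : ι → ℝ) 1, g (x i) * ∏ j ∈ s, h (x j) =
      (∫ t in Icc (0 : ℝ) 1, g t) * (∫ t in Icc (0 : ℝ) 1, h t) ^ #s := by
  classical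
  let F := Function.update (fun _ : ι => h) i g
  have hF : ∀ j ∈ s, F j = h := fun j hj => Function.update_of_ne (ne_of_mem_of_not_mem hj hi) _ _
  calc ∫ x in Icc (0 : ι → ℝ) 1, g (x i) * ∏ j ∈ s, h (x j)
      = ∫ x in Icc (0 : ι → ℝ) 1, ∏ j ∈ insert i s, F j (x j) := by
        congr with x
        rw [prod_insert hi, prod_congr rfl fun j hj => congrFun (hF j hj) (x j)]
        simp [F]
    _ = (∫ t in Icc (0 : ℝ) 1, g t) * (∫ t in Icc (0 : ℝ) 1, h t) ^ #s := by
        rw [integral_unitCube_finset_prod, prod_insert hi,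
          prod_congr rfl fun j hj => by rw [hF j hj], prod_const]
        simp [F]

theorem integral_unitCube_apply (i : ι) (g : ℝ → ℝ) :
    ∫ x in Icc (0 : ι → ℝ) 1, g (x i) = ∫ t in Icc (0 : ℝ) 1, g t := by
  simpa using integral_unitCube_apply_mul_prod (notMem_empty i) g g

theorem integral_unitCube_const (c : ℝ) : ∫ _ in Icc (0 : ι → ℝ) 1, c = c := by
  simp [measureReal_def, Real.volume_Icc_pi]

variable (s : Finset ι)

theorem integral_unitCube_sum : ∫ x in Icc (0 : ι → ℝ) 1, ∑ i ∈ s, x i = #s / 2 := by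
  rw [integral_finsetSum s fun i _ => (continuous_apply i).integrableOn_Icc]
  simp [integral_unitCube_apply _ fun t => t, integral_unitInterval_id, div_eq_mul_inv]

theorem integral_unitCube_prod_one_add :
    ∫ x in Icc (0 : ι → ℝ) 1, ∏ j ∈ s, (1 + x j) = (3 / 2) ^ #s := by
  rw [integral_unitCube_finset_prod s fun _ t => 1 + t, prod_const, integral_unitInterval_one_add]

theorem integral_unitCube_prod_one_add_sq :
    ∫ x in Icc (0 : ι → ℝ) 1, (∏ j ∈ s, (1 + x j)) ^ 2 = (7 / 3) ^ #s := by
  have h1 : ∫ t in Icc (0 : ℝ) 1, (1 + t) ^ 2 = 7 / 3 := by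
    convert integral_unitInterval_quadratic 1 2 1 using 3 <;> ring
  simp_rw [← Finset.prod_pow]
  rw [integral_unitCube_finset_prod s fun _ t => (1 + t) ^ 2, prod_const, h1]

theorem integral_unitCube_mul_apply [DecidableEq ι] (i j : ι) :
    ∫ x in Icc (0 : ι → ℝ) 1, x i * x j = 1 / 4 + if i = j then 1 / 12 else 0 := by
  by_cases hij : i = j
  · subst hij
    have h1 : ∫ t in Icc (0 : ℝ) 1, t * t = 1 / 3 := by
      convert integral_unitInterval_quadratic 0 0 1 using 3 <;> ring
    rw [integral_unitCube_apply i fun t => t * t, h1]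
    norm_num
  · have key := integral_unitCube_apply_mul_prod (notMem_singleton.2 hij) (fun t => t) fun t => t
    simp only [Finset.prod_singleton, Finset.card_singleton, pow_one,
      integral_unitInterval_id] at key
    rw [key, if_neg hij]
    norm_num

theorem integral_unitCube_sum_sq :
    ∫ x in Icc (0 : ι → ℝ) 1, (∑ i ∈ s, x i) ^ 2 = (#s : ℝ) ^ 2 / 4 + #s / 12 := by
  classical
  have hrow : ∀ i ∈ s, ∫ x in Icc (0 : ι → ℝ) 1, ∑ j ∈ s, x i * x j = #s / 4 + 1 / 12 := by
    intro i hi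
    rw [integral_finsetSum s fun j _ => (by fun_prop : Continuous _).integrableOn_Icc]
    simp [integral_unitCube_mul_apply, sum_add_distrib, hi, div_eq_mul_inv]
  simp_rw [sq, sum_mul_sum]
  rw [integral_finsetSum s fun i _ => (by fun_prop : Continuous _).integrableOn_Icc,
    sum_congr rfl hrow, sum_const, nsmul_eq_mul]
  ring

theorem integral_unitCube_sum_mul_prod_one_add :
    ∫ x in Icc (0 : ι → ℝ) 1, (∑ i ∈ s, x i) * ∏ j ∈ s, (1 + x j) =
      5 / 9 * #s * (3 / 2) ^ #s := by
  classical
  have h1 : ∫ t in Icc (0 : ℝ) 1, t * (1 + t) = 5 / 6 := by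
    convert integral_unitInterval_quadratic 0 1 1 using 3 <;> ring
  have hterm : ∀ i ∈ s,
      ∫ x in Icc (0 : ι → ℝ) 1, x i * ∏ j ∈ s, (1 + x j) = 5 / 9 * (3 / 2) ^ #s := by
    intro i hi
    calc ∫ x in Icc (0 : ι → ℝ) 1, x i * ∏ j ∈ s, (1 + x j)
        = ∫ x in Icc (0 : ι → ℝ) 1, x i * (1 + x i) * ∏ j ∈ s.erase i, (1 + x j) := by
          congr with x
          rw [mul_assoc, mul_prod_erase s (fun j => 1 + x j) hi]
      _ = 5 / 9 * (3 / 2) ^ #s := by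
          rw [integral_unitCube_apply_mul_prod (notMem_erase i s) (fun t => t * (1 + t))
            fun t => 1 + t, h1, integral_unitInterval_one_add, ← card_erase_add_one hi, pow_succ]
          ring
  simp_rw [sum_mul]
  rw [integral_finsetSum s fun i _ => (by fun_prop : Continuous _).integrableOn_Icc,
    sum_congr rfl hterm, sum_const, nsmul_eq_mul]
  ring

theorem integral_unitCube_affine_sum_prod (a b c : ℝ) :
    ∫ x in Icc (0 : ι → ℝ) 1, (a + b * ∑ i ∈ s, x i + c * ∏ j ∈ s, (1 + x j)) =
      a + b * (#s / 2) + c * (3 / 2) ^ #s := by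
  have hI : ∀ f : (ι → ℝ) → ℝ, Continuous f → Integrable f (volume.restrict (Icc 0 1)) :=
    fun f hf => hf.integrableOn_Icc
  rw [integral_add (hI _ (by fun_prop)) (hI _ (by fun_prop)),
    integral_add (hI _ (by fun_prop)) (hI _ (by fun_prop)), integral_const_mul, integral_const_mul,
    integral_unitCube_const, integral_unitCube_sum, integral_unitCube_prod_one_add]

theorem integral_unitCube_affine_sum_prod_sq_sub_sq (a b c : ℝ) :
    (∫ x in Icc (0 : ι → ℝ) 1, (a + b * ∑ i ∈ s, x i + c * ∏ j ∈ s, (1 + x j)) ^ 2) -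
        (∫ x in Icc (0 : ι → ℝ) 1, (a + b * ∑ i ∈ s, x i + c * ∏ j ∈ s, (1 + x j))) ^ 2 =
      b ^ 2 * #s / 12 + b * c * #s / 9 * (3 / 2) ^ #s + c ^ 2 * ((7 / 3) ^ #s - (9 / 4) ^ #s) := by
  have hI : ∀ f : (ι → ℝ) → ℝ, Continuous f → Integrable f (volume.restrict (Icc 0 1)) :=
    fun f hf => hf.integrableOn_Icc
  have hexpand : ∀ x : ι → ℝ, (a + b * ∑ i ∈ s, x i + c * ∏ j ∈ s, (1 + x j)) ^ 2 =
      a ^ 2 + 2 * a * b * ∑ i ∈ s, x i + 2 * a * c * ∏ j ∈ s, (1 + x j) +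
        b ^ 2 * (∑ i ∈ s, x i) ^ 2 + 2 * b * c * ((∑ i ∈ s, x i) * ∏ j ∈ s, (1 + x j)) +
        c ^ 2 * (∏ j ∈ s, (1 + x j)) ^ 2 := fun x => by ring
  have h94 : (9 / 4 : ℝ) ^ #s = ((3 / 2) ^ #s) ^ 2 := by
    rw [← pow_mul, mul_comm, pow_mul]; norm_num
  simp_rw [hexpand]
  rw [integral_add (hI _ (by fun_prop)) (hI _ (by fun_prop)),
    integral_add (hI _ (by fun_prop)) (hI _ (by fun_prop)),
    integral_add (hI _ (by fun_prop)) (hI _ (by fun_prop)),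
    integral_add (hI _ (by fun_prop)) (hI _ (by fun_prop)),
    integral_add (hI _ (by fun_prop)) (hI _ (by fun_prop)),
    integral_const_mul, integral_const_mul, integral_const_mul, integral_const_mul,
    integral_const_mul, integral_unitCube_const, integral_unitCube_sum,
    integral_unitCube_prod_one_add, integral_unitCube_sum_sq, integral_unitCube_sum_mul_prod_one_add,
    integral_unitCube_prod_one_add_sq, integral_unitCube_affine_sum_prod, h94]
  ring

end UnitCube

section Fdelta

variable {d : ℕ}

theorem fdelta_update (δ t : ℝ) (k : Fin d) (y : Fin d → ℝ) :
    fdelta δ (Function.update y k t) =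
      t + ∑ i ∈ univ.erase k, y i + δ * ((1 + t) * ∏ j ∈ univ.erase k, (1 + y j)) := by
  have hsum : ∑ i ∈ univ.erase k, Function.update y k t i = ∑ i ∈ univ.erase k, y i :=
    sum_congr rfl fun i hi => Function.update_of_ne (ne_of_mem_erase hi) _ _
  have hprod :
      ∏ j ∈ univ.erase k, (1 + Function.update y k t j) = ∏ j ∈ univ.erase k, (1 + y j) :=
    prod_congr rfl fun j hj => by rw [Function.update_of_ne (ne_of_mem_erase hj)]
  rw [fdelta, ← add_sum_erase _ _ (mem_univ k), ← mul_prod_erase _ _ (mem_univ k), hsum, hprod,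
    Function.update_self]

theorem card_erase_univ_fin (k : Fin d) : #(univ.erase k) = d - 1 := by
  rw [card_erase_of_mem (mem_univ k), card_univ, Fintype.card_fin]

theorem fdeltaVar_eq (δ : ℝ) :
    fdeltaVar d δ = d * δ / 9 * (3 / 2) ^ d + δ ^ 2 * ((7 / 3) ^ d - (9 / 4) ^ d) + d / 12 := by
  have key := integral_unitCube_affine_sum_prod_sq_sub_sq (univ : Finset (Fin d)) 0 1 δ
  simp only [zero_add, one_mul, one_pow, card_univ, Fintype.card_fin] at key
  rw [fdeltaVar]
  simp only [fdelta, key]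
  ring

theorem gk_eq (δ t : ℝ) (k : Fin d) :
    gk δ k t =
      (((d - 1 : ℕ) : ℝ) / 2 + δ * (3 / 2) ^ (d - 1)) + (1 + δ * (3 / 2) ^ (d - 1)) * t := by
  calc gk δ k t = ∫ y in Icc (0 : Fin d → ℝ) 1,
        (t + 1 * ∑ i ∈ univ.erase k, y i + δ * (1 + t) * ∏ j ∈ univ.erase k, (1 + y j)) := by
        simp_rw [gk, fdelta_update, one_mul, mul_assoc]
    _ = _ := by
        rw [integral_unitCube_affine_sum_prod, card_erase_univ_fin]
        ring

theorem hk_eq (δ : ℝ) (k : Fin d) (x : Fin d → ℝ) :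
    hk δ k x = 1 / 2 + ∑ i ∈ univ.erase k, x i + 3 * δ / 2 * ∏ j ∈ univ.erase k, (1 + x j) := by
  have key := integral_unitInterval_quadratic
    (∑ i ∈ univ.erase k, x i + δ * ∏ j ∈ univ.erase k, (1 + x j))
    (1 + δ * ∏ j ∈ univ.erase k, (1 + x j)) 0
  rw [hk]
  simp_rw [fdelta_update]
  refine (Eq.trans ?_ key).trans (by ring)
  congr with t
  ring

theorem gk_sq_sub_sq (δ : ℝ) (k : Fin d) :
    (∫ t in Icc (0 : ℝ) 1, gk δ k t ^ 2) - (∫ t in Icc (0 : ℝ) 1, gk δ k t) ^ 2 =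
      (1 + δ * (3 / 2) ^ (d - 1)) ^ 2 / 12 := by
  simp_rw [gk_eq]
  exact integral_unitInterval_affine_sq_sub_sq _ _

theorem hk_sq_sub_sq (δ : ℝ) (k : Fin d) :
    (∫ x in Icc (0 : Fin d → ℝ) 1, hk δ k x ^ 2) - (∫ x in Icc (0 : Fin d → ℝ) 1, hk δ k x) ^ 2 =
      ((d - 1 : ℕ) : ℝ) / 12 + 3 * δ / 2 * (d - 1 : ℕ) / 9 * (3 / 2) ^ (d - 1) +
        (3 * δ / 2) ^ 2 * ((7 / 3) ^ (d - 1) - (9 / 4) ^ (d - 1)) := by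
  have key := integral_unitCube_affine_sum_prod_sq_sub_sq (univ.erase k) (1 / 2) 1 (3 * δ / 2)
  simp only [one_mul, one_pow, card_erase_univ_fin] at key
  simp_rw [hk_eq, key]

end Fdelta

theorem fdelta_sobol_indices_general (d : ℕ) (δ : ℝ) (k : Fin d) :
    ((∫ t in Set.Icc (0 : ℝ) 1, (gk δ k t) ^ 2) -
        (∫ t in Set.Icc (0 : ℝ) 1, gk δ k t) ^ 2) / fdeltaVar d δ =
      (δ ^ 2 / 27 * (9 / 4 : ℝ) ^ d + δ / 9 * (3 / 2 : ℝ) ^ d + 1 / 12) /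
        ((d : ℝ) * δ / 9 * (3 / 2 : ℝ) ^ d +
          δ ^ 2 * ((7 / 3 : ℝ) ^ d - (9 / 4 : ℝ) ^ d) + (d : ℝ) / 12) ∧
    1 - ((∫ x in Set.Icc (0 : Fin d → ℝ) 1, (hk δ k x) ^ 2) -
          (∫ x in Set.Icc (0 : Fin d → ℝ) 1, hk δ k x) ^ 2) / fdeltaVar d δ =
      1 - (δ * ((d : ℝ) - 1) / 9 * (3 / 2 : ℝ) ^ d +
            δ ^ 2 * (27 / 28 * (7 / 3 : ℝ) ^ d - (9 / 4 : ℝ) ^ d) +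
            ((d : ℝ) - 1) / 12) /
          ((d : ℝ) * δ / 9 * (3 / 2 : ℝ) ^ d +
            δ ^ 2 * ((7 / 3 : ℝ) ^ d - (9 / 4 : ℝ) ^ d) + (d : ℝ) / 12) := by
  rw [gk_sq_sub_sq, hk_sq_sub_sq, fdeltaVar_eq]
  cases d with
  | zero => exact k.elim0
  | succ m =>
    have h94 : (9 / 4 : ℝ) ^ m = ((3 / 2) ^ m) ^ 2 := by
      rw [← pow_mul, mul_comm, pow_mul]; norm_num
    simp only [Nat.add_sub_cancel, Nat.cast_add, Nat.cast_one, pow_succ, h94]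
    constructor
    · congr 1; ring
    · congr 2; ring

/-- For `δ ≥ 0` and `d ≥ 1`, the first-order Sobol' index
`S_k = var(E(f_δ | x_k)) / var(f_δ)` and the total Sobol' index
`S_k^tot = 1 − var(E(f_δ | x_l, l ≠ k)) / var(f_δ)` of `f_δ` are given by the
closed-form expressions below. -/
theorem fdelta_sobol_indices (d : ℕ) (hd : 1 ≤ d) (δ : ℝ) (hδ : 0 ≤ δ) (k : Fin d) :
    ((∫ t in Set.Icc (0 : ℝ) 1, (gk δ k t) ^ 2) -
        (∫ t in Set.Icc (0 : ℝ) 1, gk δ k t) ^ 2) / fdeltaVar d δ =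
      (δ ^ 2 / 27 * (9 / 4 : ℝ) ^ d + δ / 9 * (3 / 2 : ℝ) ^ d + 1 / 12) /
        ((d : ℝ) * δ / 9 * (3 / 2 : ℝ) ^ d +
          δ ^ 2 * ((7 / 3 : ℝ) ^ d - (9 / 4 : ℝ) ^ d) + (d : ℝ) / 12) ∧
    1 - ((∫ x in Set.Icc (0 : Fin d → ℝ) 1, (hk δ k x) ^ 2) -
          (∫ x in Set.Icc (0 : Fin d → ℝ) 1, hk δ k x) ^ 2) / fdeltaVar d δ =
      1 - (δ * ((d : ℝ) - 1) / 9 * (3 / 2 : ℝ) ^ d +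
            δ ^ 2 * (27 / 28 * (7 / 3 : ℝ) ^ d - (9 / 4 : ℝ) ^ d) +
            ((d : ℝ) - 1) / 12) /
          ((d : ℝ) * δ / 9 * (3 / 2 : ℝ) ^ d +
            δ ^ 2 * ((7 / 3 : ℝ) ^ d - (9 / 4 : ℝ) ^ d) + (d : ℝ) / 12) :=
  fdelta_sobol_indices_general d δ k
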